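/- arXiv:1409.2456 — 2 statements merged into one kernel-verified Lean document; each statement's English description precedes it below -/
import Mathlib

section
/- The discrete Fréchet distance satisfies the triangle inequality: for any three finite sequences f, g, h of points in a metric space, d_F(f,h) ≤ d_F(f,g) + d_F(g,h). -/
open Function Metric

/-! ### Auxiliary lemmas -/

/-- Intermediate value theorem for natural sequences with upward steps of size at most 1. -/
private lemma nat_ivt (F : ℕ → ℕ) (h0 : F 0 = 0) (hstep : ∀ s, F (s+1) ≤ F s + 1) :
    ∀ N k, k ≤ F N → ∃ s, s ≤ N ∧ F s = k := by
  intro N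
  induction N with
  | zero => intro k hk; exact ⟨0, le_refl _, by omega⟩
  | succ N ih =>
    intro k hk
    rcases le_or_gt k (F N) with h | h
    · obtain ⟨s, hs, hfs⟩ := ih k h; exact ⟨s, by omega, hfs⟩
    · have := hstep N; exact ⟨N+1, le_refl _, by omega⟩

private lemma mono_surj_step {L n : ℕ} (β : Fin (L+1) → Fin (n+1))
    (hm : Monotone β) (hs : Surjective β) (i : ℕ) (hi : i < L) :
    (β ⟨i+1, by omega⟩ : ℕ) ≤ (β ⟨i, by omega⟩ : ℕ) + 1 := by
  by_contra hc
  push_neg at hc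
  have hn : (β ⟨i, by omega⟩ : ℕ) + 1 ≤ n := by
    have := (β ⟨i+1, by omega⟩).isLt; omega
  obtain ⟨t, ht⟩ := hs ⟨(β ⟨i, by omega⟩ : ℕ) + 1, by omega⟩
  have htv : (β t : ℕ) = (β ⟨i, by omega⟩ : ℕ) + 1 := congrArg Fin.val ht
  rcases le_or_gt t.val i with h | h
  · have hle : t ≤ (⟨i, by omega⟩ : Fin (L+1)) := h
    have h2 : (β t : ℕ) ≤ (β ⟨i, by omega⟩ : ℕ) := hm hle
    omega
  · have hle : (⟨i+1, by omega⟩ : Fin (L+1)) ≤ t := h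
    have h2 : (β ⟨i+1, by omega⟩ : ℕ) ≤ (β t : ℕ) := hm hle
    omega

private lemma mono_surj_zero {L n : ℕ} (β : Fin (L+1) → Fin (n+1))
    (hm : Monotone β) (hs : Surjective β) : (β ⟨0, by omega⟩ : ℕ) = 0 := by
  obtain ⟨t, ht⟩ := hs ⟨0, by omega⟩
  have htv : (β t : ℕ) = 0 := congrArg Fin.val ht
  have hle : (⟨0, by omega⟩ : Fin (L+1)) ≤ t := t.zero_le
  have h2 : (β ⟨0, by omega⟩ : ℕ) ≤ (β t : ℕ) := hm hle
  omega

private lemma mono_surj_top {L n : ℕ} (β : Fin (L+1) → Fin (n+1))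
    (hm : Monotone β) (hs : Surjective β) : (β ⟨L, by omega⟩ : ℕ) = n := by
  obtain ⟨t, ht⟩ := hs ⟨n, by omega⟩
  have htv : (β t : ℕ) = n := congrArg Fin.val ht
  have hle : t ≤ (⟨L, by omega⟩ : Fin (L+1)) := Nat.lt_succ_iff.mp t.isLt
  have h2 : (β t : ℕ) ≤ (β ⟨L, by omega⟩ : ℕ) := hm hle
  have := (β ⟨L, by omega⟩).isLt
  omega

/-! ### The merge walk -/

private def mStep (B C : ℕ → ℕ) (L₁ L₂ : ℕ) (ij : ℕ × ℕ) : ℕ × ℕ :=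
  if ij.1 < L₁ ∧ B (ij.1+1) = B ij.1 then (ij.1+1, ij.2)
  else if ij.2 < L₂ ∧ C (ij.2+1) = C ij.2 then (ij.1, ij.2+1)
  else (min (ij.1+1) L₁, min (ij.2+1) L₂)

private def mP (B C : ℕ → ℕ) (L₁ L₂ : ℕ) : ℕ → ℕ × ℕ
  | 0 => (0,0)
  | s+1 => mStep B C L₁ L₂ (mP B C L₁ L₂ s)

private lemma mStep_spec {n : ℕ} (B C : ℕ → ℕ) (L₁ L₂ : ℕ)
    (hBstep : ∀ i, B i ≤ B (i+1) ∧ B (i+1) ≤ B i + 1)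
    (hCstep : ∀ j, C j ≤ C (j+1) ∧ C (j+1) ≤ C j + 1)
    (hBle : ∀ i, B i ≤ n) (hCle : ∀ j, C j ≤ n)
    (hBtop : B L₁ = n) (hCtop : C L₂ = n)
    (i j : ℕ) (hi : i ≤ L₁) (hj : j ≤ L₂) (heq : B i = C j) :
    (i ≤ (mStep B C L₁ L₂ (i, j)).1 ∧ (mStep B C L₁ L₂ (i, j)).1 ≤ i + 1 ∧
      (mStep B C L₁ L₂ (i, j)).1 ≤ L₁) ∧
    (j ≤ (mStep B C L₁ L₂ (i, j)).2 ∧ (mStep B C L₁ L₂ (i, j)).2 ≤ j + 1 ∧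
      (mStep B C L₁ L₂ (i, j)).2 ≤ L₂) ∧
    B (mStep B C L₁ L₂ (i, j)).1 = C (mStep B C L₁ L₂ (i, j)).2 ∧
    (¬(i = L₁ ∧ j = L₂) → i + j + 1 ≤ (mStep B C L₁ L₂ (i, j)).1 + (mStep B C L₁ L₂ (i, j)).2) := by
  simp only [mStep]
  split_ifs with h1 h2
  · exact ⟨⟨by omega, by omega, by omega⟩, ⟨by omega, by omega, by omega⟩,
      by simp only; rw [h1.2]; exact heq, by intro _; simp only; omega⟩
  · exact ⟨⟨by omega, by omega, by omega⟩, ⟨by omega, by omega, by omega⟩,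
      by simp only; rw [h2.2]; exact heq, by intro _; simp only; omega⟩
  · push_neg at h1 h2
    simp only
    refine ⟨⟨by omega, by omega, by omega⟩, ⟨by omega, by omega, by omega⟩, ?_, by intro hne; omega⟩
    rcases eq_or_lt_of_le hi with hiL | hiL
    · rcases eq_or_lt_of_le hj with hjL | hjL
      · have e1 : min (i+1) L₁ = i := by omega
        have e2 : min (j+1) L₂ = j := by omega
        rw [e1, e2]; exact heq
      · exfalso
        have hCj : C j = n := by rw [← heq, hiL]; exact hBtop
        have := hCstep j
        have := hCle (j+1)
        have := h2 hjL
        omega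
    · rcases eq_or_lt_of_le hj with hjL | hjL
      · exfalso
        have hBi : B i = n := by rw [heq, hjL]; exact hCtop
        have := hBstep i
        have := hBle (i+1)
        have := h1 hiL
        omega
      · have e1 : min (i+1) L₁ = i+1 := by omega
        have e2 : min (j+1) L₂ = j+1 := by omega
        rw [e1, e2]
        have hB := hBstep i
        have hC := hCstep j
        have := h1 hiL
        have := h2 hjL
        omega

private lemma mP_inv {n : ℕ} (B C : ℕ → ℕ) (L₁ L₂ : ℕ)
    (hBstep : ∀ i, B i ≤ B (i+1) ∧ B (i+1) ≤ B i + 1)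
    (hCstep : ∀ j, C j ≤ C (j+1) ∧ C (j+1) ≤ C j + 1)
    (hBle : ∀ i, B i ≤ n) (hCle : ∀ j, C j ≤ n)
    (hBtop : B L₁ = n) (hCtop : C L₂ = n) (hB0 : B 0 = 0) (hC0 : C 0 = 0) :
    ∀ s, (mP B C L₁ L₂ s).1 ≤ L₁ ∧ (mP B C L₁ L₂ s).2 ≤ L₂ ∧
      B (mP B C L₁ L₂ s).1 = C (mP B C L₁ L₂ s).2 ∧
      min s (L₁ + L₂) ≤ (mP B C L₁ L₂ s).1 + (mP B C L₁ L₂ s).2 := by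
  intro s
  induction s with
  | zero =>
    refine ⟨by simp [mP], by simp [mP], ?_, by simp [mP]⟩
    show B (0,0).1 = C (0,0).2
    simp only
    rw [hB0, hC0]
  | succ s ih =>
    obtain ⟨hi, hj, heq, hsum⟩ := ih
    have hspec := mStep_spec (n := n) B C L₁ L₂ hBstep hCstep hBle hCle hBtop hCtop
      (mP B C L₁ L₂ s).1 (mP B C L₁ L₂ s).2 hi hj heq
    have hrw : mP B C L₁ L₂ (s+1) =
        mStep B C L₁ L₂ ((mP B C L₁ L₂ s).1, (mP B C L₁ L₂ s).2) := by
      show mStep B C L₁ L₂ _ = _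
      congr
    rw [hrw]
    obtain ⟨⟨h1, h2, h3⟩, ⟨h4, h5, h6⟩, h7, h8⟩ := hspec
    refine ⟨h3, h6, h7, ?_⟩
    by_cases hend : (mP B C L₁ L₂ s).1 = L₁ ∧ (mP B C L₁ L₂ s).2 = L₂
    · omega
    · have := h8 hend; omega

private lemma mP_step {n : ℕ} (B C : ℕ → ℕ) (L₁ L₂ : ℕ)
    (hBstep : ∀ i, B i ≤ B (i+1) ∧ B (i+1) ≤ B i + 1)
    (hCstep : ∀ j, C j ≤ C (j+1) ∧ C (j+1) ≤ C j + 1)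
    (hBle : ∀ i, B i ≤ n) (hCle : ∀ j, C j ≤ n)
    (hBtop : B L₁ = n) (hCtop : C L₂ = n) (hB0 : B 0 = 0) (hC0 : C 0 = 0) :
    ∀ s, (mP B C L₁ L₂ s).1 ≤ (mP B C L₁ L₂ (s+1)).1 ∧
      (mP B C L₁ L₂ (s+1)).1 ≤ (mP B C L₁ L₂ s).1 + 1 ∧
      (mP B C L₁ L₂ s).2 ≤ (mP B C L₁ L₂ (s+1)).2 ∧
      (mP B C L₁ L₂ (s+1)).2 ≤ (mP B C L₁ L₂ s).2 + 1 := by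
  intro s
  obtain ⟨hi, hj, heq, -⟩ := mP_inv (n := n) B C L₁ L₂ hBstep hCstep hBle hCle hBtop hCtop hB0 hC0 s
  have hspec := mStep_spec (n := n) B C L₁ L₂ hBstep hCstep hBle hCle hBtop hCtop
    (mP B C L₁ L₂ s).1 (mP B C L₁ L₂ s).2 hi hj heq
  have hrw : mP B C L₁ L₂ (s+1) =
      mStep B C L₁ L₂ ((mP B C L₁ L₂ s).1, (mP B C L₁ L₂ s).2) := by
    show mStep B C L₁ L₂ _ = _
    congr
  rw [hrw]
  obtain ⟨⟨h1, h2, h3⟩, ⟨h4, h5, h6⟩, h7, h8⟩ := hspec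
  exact ⟨h1, h2, h4, h5⟩

/-- Two monotone surjective reparametrizations onto the same index set can be merged. -/
private lemma merge_exists {n L₁ L₂ : ℕ}
    (β₁ : Fin (L₁+1) → Fin (n+1)) (σ₂ : Fin (L₂+1) → Fin (n+1))
    (hβm : Monotone β₁) (hβs : Surjective β₁)
    (hσm : Monotone σ₂) (hσs : Surjective σ₂) :
    ∃ (L : ℕ) (a : Fin (L+1) → Fin (L₁+1)) (b : Fin (L+1) → Fin (L₂+1)),
      Monotone a ∧ Monotone b ∧ Surjective a ∧ Surjective b ∧
      ∀ s, β₁ (a s) = σ₂ (b s) := by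
  classical
  set B : ℕ → ℕ := fun i => (β₁ ⟨min i L₁, by omega⟩ : ℕ) with hBdef
  set C : ℕ → ℕ := fun j => (σ₂ ⟨min j L₂, by omega⟩ : ℕ) with hCdef
  have hBstep : ∀ i, B i ≤ B (i+1) ∧ B (i+1) ≤ B i + 1 := by
    intro i
    rcases lt_or_ge i L₁ with h | h
    · have e1 : min i L₁ = i := by omega
      have e2 : min (i+1) L₁ = i+1 := by omega
      constructor
      · have : β₁ ⟨min i L₁, by omega⟩ ≤ β₁ ⟨min (i+1) L₁, by omega⟩ := by
          apply hβm; rw [Fin.le_def]; simp only [Fin.val_mk]; omega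
        exact this
      · have := mono_surj_step β₁ hβm hβs i h
        simp only [hBdef, e1, e2]
        exact this
    · have e1 : min i L₁ = L₁ := by omega
      have e2 : min (i+1) L₁ = L₁ := by omega
      simp only [hBdef, e1, e2]
      omega
  have hCstep : ∀ j, C j ≤ C (j+1) ∧ C (j+1) ≤ C j + 1 := by
    intro j
    rcases lt_or_ge j L₂ with h | h
    · have e1 : min j L₂ = j := by omega
      have e2 : min (j+1) L₂ = j+1 := by omega
      constructor
      · have : σ₂ ⟨min j L₂, by omega⟩ ≤ σ₂ ⟨min (j+1) L₂, by omega⟩ := by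
          apply hσm; rw [Fin.le_def]; simp only [Fin.val_mk]; omega
        exact this
      · have := mono_surj_step σ₂ hσm hσs j h
        simp only [hCdef, e1, e2]
        exact this
    · have e1 : min j L₂ = L₂ := by omega
      have e2 : min (j+1) L₂ = L₂ := by omega
      simp only [hCdef, e1, e2]
      omega
  have hBle : ∀ i, B i ≤ n := fun i => Nat.lt_succ_iff.mp (β₁ _).isLt
  have hCle : ∀ j, C j ≤ n := fun j => Nat.lt_succ_iff.mp (σ₂ _).isLt
  have hBtop : B L₁ = n := by
    have := mono_surj_top β₁ hβm hβs
    simp only [hBdef, min_self]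
    exact this
  have hCtop : C L₂ = n := by
    have := mono_surj_top σ₂ hσm hσs
    simp only [hCdef, min_self]
    exact this
  have hB0 : B 0 = 0 := by
    have := mono_surj_zero β₁ hβm hβs
    simp only [hBdef, Nat.zero_min]
    exact this
  have hC0 : C 0 = 0 := by
    have := mono_surj_zero σ₂ hσm hσs
    simp only [hCdef, Nat.zero_min]
    exact this
  have hinv := mP_inv (n := n) B C L₁ L₂ hBstep hCstep hBle hCle hBtop hCtop hB0 hC0
  have hstep := mP_step (n := n) B C L₁ L₂ hBstep hCstep hBle hCle hBtop hCtop hB0 hC0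
  set L : ℕ := L₁ + L₂ with hLdef
  have hfinal : (mP B C L₁ L₂ L).1 = L₁ ∧ (mP B C L₁ L₂ L).2 = L₂ := by
    obtain ⟨h1, h2, -, h4⟩ := hinv L
    simp only [min_self] at h4
    omega
  have hFmono : Monotone (fun s => (mP B C L₁ L₂ s).1) :=
    monotone_nat_of_le_succ (fun s => (hstep s).1)
  have hGmono : Monotone (fun s => (mP B C L₁ L₂ s).2) :=
    monotone_nat_of_le_succ (fun s => (hstep s).2.2.1)
  refine ⟨L, fun s => ⟨min (mP B C L₁ L₂ s.val).1 L₁, by omega⟩,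
    fun s => ⟨min (mP B C L₁ L₂ s.val).2 L₂, by omega⟩,
    ?_, ?_, ?_, ?_, ?_⟩
  · intro s t hst
    rw [Fin.le_def]
    have hmm : (mP B C L₁ L₂ s.val).1 ≤ (mP B C L₁ L₂ t.val).1 :=
      hFmono (Fin.le_def.mp hst)
    simp only [Fin.val_mk]
    omega
  · intro s t hst
    rw [Fin.le_def]
    have hmm : (mP B C L₁ L₂ s.val).2 ≤ (mP B C L₁ L₂ t.val).2 :=
      hGmono (Fin.le_def.mp hst)
    simp only [Fin.val_mk]
    omega
  · intro y
    obtain ⟨s, hs, hfs⟩ := nat_ivt (fun s => (mP B C L₁ L₂ s).1) rfl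
      (fun s => (hstep s).2.1) L y.val
      (by have h1 := hfinal.1; have h2 := y.isLt
          show y.val ≤ (mP B C L₁ L₂ L).1; omega)
    refine ⟨⟨s, by omega⟩, Fin.ext ?_⟩
    simp only [Fin.val_mk]
    have h2 := y.isLt
    omega
  · intro y
    obtain ⟨s, hs, hfs⟩ := nat_ivt (fun s => (mP B C L₁ L₂ s).2) rfl
      (fun s => (hstep s).2.2.2) L y.val
      (by have h1 := hfinal.2; have h2 := y.isLt
          show y.val ≤ (mP B C L₁ L₂ L).2; omega)
    refine ⟨⟨s, by omega⟩, Fin.ext ?_⟩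
    simp only [Fin.val_mk]
    have h2 := y.isLt
    omega
  · intro s
    have heq := (hinv s.val).2.2.1
    simp only [hBdef, hCdef] at heq
    exact Fin.ext heq

/-- The discrete Fréchet distance between two finite sequences of points in a
metric space: the infimum over all monotone nondecreasing surjective couplings
of the index sets of the maximum distance between coupled points. -/
noncomputable def discreteFrechet {M : Type*} [MetricSpace M] {m n : ℕ}
    (f : Fin (m + 1) → M) (g : Fin (n + 1) → M) : ℝ :=
  sInf { r : ℝ | ∃ (L : ℕ) (σ : Fin (L + 1) → Fin (m + 1)) (β : Fin (L + 1) → Fin (n + 1)),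
    Monotone σ ∧ Monotone β ∧ Surjective σ ∧ Surjective β ∧
    r = ⨆ s, dist (f (σ s)) (g (β s)) }

private lemma frechetSet_nonempty {M : Type*} [MetricSpace M] {m n : ℕ}
    (f : Fin (m + 1) → M) (g : Fin (n + 1) → M) :
    { r : ℝ | ∃ (L : ℕ) (σ : Fin (L + 1) → Fin (m + 1)) (β : Fin (L + 1) → Fin (n + 1)),
      Monotone σ ∧ Monotone β ∧ Surjective σ ∧ Surjective β ∧
      r = ⨆ s, dist (f (σ s)) (g (β s)) }.Nonempty := by
  refine ⟨_, m + n, fun s => ⟨min s.val m, by omega⟩, fun s => ⟨s.val - m, by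
      have := s.isLt; omega⟩, ?_, ?_, ?_, ?_, rfl⟩
  · intro s t hst
    rw [Fin.le_def]
    have := Fin.le_def.mp hst
    simp only [Fin.val_mk]
    omega
  · intro s t hst
    rw [Fin.le_def]
    have := Fin.le_def.mp hst
    simp only [Fin.val_mk]
    omega
  · intro y
    have := y.isLt
    exact ⟨⟨y.val, by omega⟩, Fin.ext (by simp only [Fin.val_mk]; omega)⟩
  · intro y
    have := y.isLt
    exact ⟨⟨y.val + m, by omega⟩, Fin.ext (by simp only [Fin.val_mk]; omega)⟩

private lemma frechetSet_nonneg {M : Type*} [MetricSpace M] {m n : ℕ}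
    (f : Fin (m + 1) → M) (g : Fin (n + 1) → M) :
    ∀ r ∈ { r : ℝ | ∃ (L : ℕ) (σ : Fin (L + 1) → Fin (m + 1)) (β : Fin (L + 1) → Fin (n + 1)),
      Monotone σ ∧ Monotone β ∧ Surjective σ ∧ Surjective β ∧
      r = ⨆ s, dist (f (σ s)) (g (β s)) }, 0 ≤ r := by
  rintro r ⟨L, σ, β, -, -, -, -, rfl⟩
  exact Real.iSup_nonneg (fun s => dist_nonneg)

/-- The discrete Fréchet distance satisfies the triangle inequality. -/
theorem discreteFrechet_triangle {M : Type*} [MetricSpace M] {m n p : ℕ}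
    (f : Fin (m + 1) → M) (g : Fin (n + 1) → M) (h : Fin (p + 1) → M) :
    discreteFrechet f h ≤ discreteFrechet f g + discreteFrechet g h := by
  classical
  set S₁ := { r : ℝ | ∃ (L : ℕ) (σ : Fin (L + 1) → Fin (m + 1)) (β : Fin (L + 1) → Fin (n + 1)),
    Monotone σ ∧ Monotone β ∧ Surjective σ ∧ Surjective β ∧
    r = ⨆ s, dist (f (σ s)) (g (β s)) } with hS₁
  set S₂ := { r : ℝ | ∃ (L : ℕ) (σ : Fin (L + 1) → Fin (n + 1)) (β : Fin (L + 1) → Fin (p + 1)),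
    Monotone σ ∧ Monotone β ∧ Surjective σ ∧ Surjective β ∧
    r = ⨆ s, dist (g (σ s)) (h (β s)) } with hS₂
  have key : ∀ r₁ ∈ S₁, ∀ r₂ ∈ S₂, discreteFrechet f h ≤ r₁ + r₂ := by
    rintro r₁ ⟨L₁, σ₁, β₁, hσ₁m, hβ₁m, hσ₁s, hβ₁s, rfl⟩
    rintro r₂ ⟨L₂, σ₂, β₂, hσ₂m, hβ₂m, hσ₂s, hβ₂s, rfl⟩
    obtain ⟨L, a, b, ham, hbm, has, hbs, hab⟩ :=
      merge_exists β₁ σ₂ hβ₁m hβ₁s hσ₂m hσ₂s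
    have hmem : (⨆ s : Fin (L + 1), dist (f (σ₁ (a s))) (h (β₂ (b s)))) ∈
        { r : ℝ | ∃ (L : ℕ) (σ : Fin (L + 1) → Fin (m + 1)) (β : Fin (L + 1) → Fin (p + 1)),
          Monotone σ ∧ Monotone β ∧ Surjective σ ∧ Surjective β ∧
          r = ⨆ s, dist (f (σ s)) (h (β s)) } :=
      ⟨L, σ₁ ∘ a, β₂ ∘ b, hσ₁m.comp ham, hβ₂m.comp hbm,
        hσ₁s.comp has, hβ₂s.comp hbs, rfl⟩
    have hle1 : discreteFrechet f h ≤ ⨆ s : Fin (L + 1), dist (f (σ₁ (a s))) (h (β₂ (b s))) :=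
      csInf_le ⟨0, frechetSet_nonneg f h⟩ hmem
    refine hle1.trans ?_
    apply ciSup_le
    intro s
    have htri : dist (f (σ₁ (a s))) (h (β₂ (b s))) ≤
        dist (f (σ₁ (a s))) (g (β₁ (a s))) + dist (g (σ₂ (b s))) (h (β₂ (b s))) := by
      rw [hab s]
      exact dist_triangle _ _ _
    refine htri.trans (add_le_add ?_ ?_)
    · exact le_ciSup (f := fun s' => dist (f (σ₁ s')) (g (β₁ s')))
        (Set.Finite.bddAbove (Set.finite_range _)) (a s)
    · exact le_ciSup (f := fun s' => dist (g (σ₂ s')) (h (β₂ s')))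
        (Set.Finite.bddAbove (Set.finite_range _)) (b s)
  have hne₁ : S₁.Nonempty := frechetSet_nonempty f g
  have hne₂ : S₂.Nonempty := frechetSet_nonempty g h
  have h2 : ∀ r₁ ∈ S₁, discreteFrechet f h - r₁ ≤ sInf S₂ := by
    intro r₁ h₁
    apply le_csInf hne₂
    intro r₂ h₂
    have := key r₁ h₁ r₂ h₂
    linarith
  have h3 : discreteFrechet f h - sInf S₂ ≤ sInf S₁ := by
    apply le_csInf hne₁
    intro r₁ h₁
    have := h2 r₁ h₁
    linarith
  have e1 : discreteFrechet f g = sInf S₁ := rfl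
  have e2 : discreteFrechet g h = sInf S₂ := rfl
  rw [e1, e2]
  linarith
end

section
/- Let G = (V, E) be a finite graph with a straight-line embedding in ℝ², P = (p_1, ..., p_n) a sequence of points in ℝ², and ε > 0. Define a walk Q = (q_1, ..., q_m) in G to be feasible if consecutive vertices of Q are adjacent in G and d_F(P,Q) ≤ ε. Then a feasible walk exists if and only if there is a path in the 'free-space' directed graph whose nodes are pairs (v, j) with v ∈ V, 1 ≤ j ≤ n, and d(v, p_j) ≤ ε, with edges from (v, j) to (v, j+1), from (v, j) to (w, j+1) for vw ∈ E, and from (v,j) to (w,j) for vw ∈ E, starting at some node (v, 1) and ending at some node (w, n). -/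
open Function Metric

section AuxLemmas

private lemma natIVT (f : ℕ → ℕ) : ∀ (L : ℕ), f 0 = 0 → (∀ s < L, f (s+1) ≤ f s + 1) →
    ∀ t ≤ f L, ∃ s ≤ L, f s = t := by
  intro L
  induction L with
  | zero => intro h0 _ t ht; exact ⟨0, le_refl _, by omega⟩
  | succ L ih =>
    intro h0 hstep t ht
    by_cases h : t ≤ f L
    · obtain ⟨s, hs, hfs⟩ := ih h0 (fun s hs => hstep s (by omega)) t h
      exact ⟨s, by omega, hfs⟩
    · have := hstep L (by omega)
      exact ⟨L+1, le_refl _, by omega⟩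

private lemma stepMonoLe (f : ℕ → ℕ) (L : ℕ) (hstep : ∀ s < L, f s ≤ f (s+1)) :
    ∀ s t, s ≤ t → t ≤ L → f s ≤ f t := by
  intro s t hst htL
  induction t with
  | zero => obtain rfl : s = 0 := by omega
            exact le_rfl
  | succ t ih =>
    rcases Nat.lt_or_ge s (t+1) with h | h
    · exact le_trans (ih (by omega) (by omega)) (hstep t (by omega))
    · obtain rfl : s = t + 1 := by omega
      exact le_rfl

private lemma finUnitStep {k L : ℕ} (σ : Fin (L+1) → Fin (k+1)) (hm : Monotone σ)
    (hs : Surjective σ) {s : ℕ} (h : s < L) :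
    (σ ⟨s+1, by omega⟩ : ℕ) ≤ (σ ⟨s, by omega⟩ : ℕ) + 1 := by
  set s0 : Fin (L+1) := ⟨s, by omega⟩ with hs0
  set s1 : Fin (L+1) := ⟨s+1, by omega⟩ with hs1
  by_contra hc
  push_neg at hc
  have ha1 : (σ s0 : ℕ) + 1 < k + 1 := by
    have := (σ s1).isLt; omega
  obtain ⟨u, hu⟩ := hs ⟨(σ s0 : ℕ)+1, ha1⟩
  have hv : (σ u : ℕ) = (σ s0 : ℕ) + 1 := congrArg Fin.val hu
  rcases le_or_gt (u : ℕ) s with h1 | h1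
  · have hle : u ≤ s0 := by rw [Fin.le_def]; exact h1
    have h2 : (σ u : ℕ) ≤ (σ s0 : ℕ) := hm hle
    omega
  · have hle : s1 ≤ u := by rw [Fin.le_def]; exact h1
    have h2 : (σ s1 : ℕ) ≤ (σ u : ℕ) := hm hle
    omega

private lemma finMS_zero {k L : ℕ} (σ : Fin (L+1) → Fin (k+1)) (hm : Monotone σ)
    (hs : Surjective σ) : σ 0 = 0 := by
  obtain ⟨u, hu⟩ := hs 0
  have := hm (Fin.zero_le u)
  rw [hu] at this
  exact le_antisymm this (Fin.zero_le _)

private lemma finMS_last {k L : ℕ} (σ : Fin (L+1) → Fin (k+1)) (hm : Monotone σ)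
    (hs : Surjective σ) : σ (Fin.last L) = Fin.last k := by
  obtain ⟨u, hu⟩ := hs (Fin.last k)
  have := hm (Fin.le_last u)
  rw [hu] at this
  exact le_antisymm (Fin.le_last _) this

end AuxLemmas


private lemma exists_coupling_of_frechet_le {M : Type*} [MetricSpace M] {m n : ℕ}
    (f : Fin (m + 1) → M) (g : Fin (n + 1) → M) {ε : ℝ}
    (h : discreteFrechet f g ≤ ε) :
    ∃ (L : ℕ) (σ : Fin (L + 1) → Fin (m + 1)) (β : Fin (L + 1) → Fin (n + 1)),
      Monotone σ ∧ Monotone β ∧ Surjective σ ∧ Surjective β ∧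
      ∀ s, dist (f (σ s)) (g (β s)) ≤ ε := by
  rw [discreteFrechet] at h
  set S := { r : ℝ | ∃ (L : ℕ) (σ : Fin (L + 1) → Fin (m + 1)) (β : Fin (L + 1) → Fin (n + 1)),
    Monotone σ ∧ Monotone β ∧ Surjective σ ∧ Surjective β ∧
    r = ⨆ s, dist (f (σ s)) (g (β s)) } with hS
  have hne : S.Nonempty := by
    refine ⟨_, ⟨m + n, fun s => ⟨min s m, by omega⟩, fun s => ⟨s - m, by have := s.isLt; omega⟩,
      ?_, ?_, ?_, ?_, rfl⟩⟩
    · intro a b hab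
      rw [Fin.le_def] at hab ⊢
      simp only
      omega
    · intro a b hab
      rw [Fin.le_def] at hab ⊢
      simp only
      omega
    · intro j
      refine ⟨⟨(j : ℕ), by have := j.isLt; omega⟩, ?_⟩
      apply Fin.ext
      simp only
      have := j.isLt; omega
    · intro i
      refine ⟨⟨m + (i : ℕ), by have := i.isLt; omega⟩, ?_⟩
      apply Fin.ext
      simp only
      omega
  have hsub : S ⊆ Set.range (fun p : Fin (m+1) × Fin (n+1) => dist (f p.1) (g p.2)) := by
    rintro r ⟨L, σ, β, _, _, _, _, hr⟩
    obtain ⟨s0, hs0⟩ := Finite.exists_max (fun s : Fin (L+1) => dist (f (σ s)) (g (β s)))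
    refine ⟨(σ s0, β s0), ?_⟩
    simp only
    rw [hr]
    exact le_antisymm
      (ciSup_le hs0)
      (le_ciSup (f := fun s => dist (f (σ s)) (g (β s))) (Set.finite_range _).bddAbove s0)
      |>.symm
  have hfin : S.Finite := (Set.finite_range _).subset hsub
  have hmem : sInf S ∈ S := hne.csInf_mem hfin
  obtain ⟨L, σ, β, hmσ, hmβ, hsσ, hsβ, hr⟩ := hmem
  refine ⟨L, σ, β, hmσ, hmβ, hsσ, hsβ, fun s => ?_⟩
  calc dist (f (σ s)) (g (β s))
      ≤ ⨆ s, dist (f (σ s)) (g (β s)) :=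
        le_ciSup (f := fun s => dist (f (σ s)) (g (β s))) (Set.finite_range _).bddAbove s
    _ ≤ ε := hr ▸ h

private lemma frechet_le_of_coupling {M : Type*} [MetricSpace M] {m n L : ℕ} {ε : ℝ}
    (f : Fin (m + 1) → M) (g : Fin (n + 1) → M)
    (σ : Fin (L + 1) → Fin (m + 1)) (β : Fin (L + 1) → Fin (n + 1))
    (hmσ : Monotone σ) (hmβ : Monotone β) (hsσ : Surjective σ) (hsβ : Surjective β)
    (hle : ∀ s, dist (f (σ s)) (g (β s)) ≤ ε) : discreteFrechet f g ≤ ε := by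
  rw [discreteFrechet]
  apply csInf_le_of_le (b := ⨆ s, dist (f (σ s)) (g (β s)))
  · refine ⟨0, ?_⟩
    rintro r ⟨L', σ', β', _, _, _, _, hr⟩
    rw [hr]
    exact Real.iSup_nonneg (fun s => dist_nonneg)
  · exact ⟨L, σ, β, hmσ, hmβ, hsσ, hsβ, rfl⟩
  · exact ciSup_le hle

private lemma adj_step {V : Type*} (G : SimpleGraph V) {m : ℕ} (Q : Fin (m+1) → V)
    (hadj : ∀ i : Fin m, G.Adj (Q i.castSucc) (Q i.succ)) (a b : Fin (m+1))
    (hab : (b : ℕ) = (a : ℕ) + 1) : G.Adj (Q a) (Q b) := by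
  have ha : (a : ℕ) < m := by have := b.isLt; omega
  have h1 : (⟨(a : ℕ), ha⟩ : Fin m).castSucc = a := Fin.ext rfl
  have h2 : (⟨(a : ℕ), ha⟩ : Fin m).succ = b := Fin.ext (by simp [Fin.val_succ]; omega)
  have := hadj ⟨(a : ℕ), ha⟩
  rwa [h1, h2] at this


set_option maxHeartbeats 1000000 in
/-- Free-space graph characterization of feasible map-matching walks: a walk in
the embedded graph G within discrete Fréchet distance ε of the curve P exists
iff there is a path in the free-space directed graph from a node (v, 0) to a
node (w, n). -/
theorem feasible_walk_iff_freeSpace_path {V : Type*} (G : SimpleGraph V)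
    (pos : V → EuclideanSpace ℝ (Fin 2)) (n : ℕ) (P : ℕ → EuclideanSpace ℝ (Fin 2))
    (ε : ℝ) (hε : 0 < ε) :
    (∃ (m : ℕ) (Q : Fin (m + 1) → V),
        (∀ i : Fin m, G.Adj (Q i.castSucc) (Q i.succ)) ∧
          discreteFrechet (fun j : Fin (n + 1) => P j) (fun i => pos (Q i)) ≤ ε) ↔
      ∃ v w : V,
        dist (pos v) (P 0) ≤ ε ∧ dist (pos w) (P n) ≤ ε ∧
          Relation.ReflTransGen
            (fun a b : V × ℕ =>
              b.2 ≤ n ∧ dist (pos a.1) (P a.2) ≤ ε ∧ dist (pos b.1) (P b.2) ≤ ε ∧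
                ((a.1 = b.1 ∧ b.2 = a.2 + 1) ∨ (G.Adj a.1 b.1 ∧ b.2 = a.2 + 1) ∨
                  (G.Adj a.1 b.1 ∧ b.2 = a.2)))
            (v, 0) (w, n) := by
  set R : V × ℕ → V × ℕ → Prop := fun a b =>
    b.2 ≤ n ∧ dist (pos a.1) (P a.2) ≤ ε ∧ dist (pos b.1) (P b.2) ≤ ε ∧
      ((a.1 = b.1 ∧ b.2 = a.2 + 1) ∨ (G.Adj a.1 b.1 ∧ b.2 = a.2 + 1) ∨
        (G.Adj a.1 b.1 ∧ b.2 = a.2)) with hR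
  clear_value R
  constructor
  · rintro ⟨m, Q, hadj, hd⟩
    obtain ⟨L, σ, β, hmσ, hmβ, hsσ, hsβ, hdist0⟩ :=
      exists_coupling_of_frechet_le (fun j : Fin (n + 1) => P j) (fun i => pos (Q i)) hd
    clear hd
    have hdist : ∀ s : Fin (L+1), dist (P ((σ s : ℕ))) (pos (Q (β s))) ≤ ε := hdist0
    clear hdist0
    have chain : ∀ k, (hk : k ≤ L) → Relation.ReflTransGen R
        (Q (β ⟨0, by omega⟩), (σ ⟨0, by omega⟩ : ℕ))
        (Q (β ⟨k, by omega⟩), (σ ⟨k, by omega⟩ : ℕ)) := by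
      intro k
      induction k with
      | zero => intro _; exact Relation.ReflTransGen.refl
      | succ k ih =>
        intro hk
        have hσu := finUnitStep σ hmσ hsσ (s := k) (by omega)
        have hβu := finUnitStep β hmβ hsβ (s := k) (by omega)
        have hσm : (σ ⟨k, by omega⟩ : ℕ) ≤ (σ ⟨k+1, by omega⟩ : ℕ) :=
          hmσ (a := ⟨k, by omega⟩) (b := ⟨k+1, by omega⟩) (Fin.mk_le_mk.mpr (by omega))
        have hβm : (β ⟨k, by omega⟩ : ℕ) ≤ (β ⟨k+1, by omega⟩ : ℕ) :=
          hmβ (a := ⟨k, by omega⟩) (b := ⟨k+1, by omega⟩) (Fin.mk_le_mk.mpr (by omega))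
        by_cases hcase : (σ ⟨k+1, by omega⟩ : ℕ) = (σ ⟨k, by omega⟩ : ℕ) ∧
            (β ⟨k+1, by omega⟩ : ℕ) = (β ⟨k, by omega⟩ : ℕ)
        · have e1 : β (⟨k+1, by omega⟩ : Fin (L+1)) = β ⟨k, by omega⟩ := Fin.ext hcase.2
          have e2 : σ (⟨k+1, by omega⟩ : Fin (L+1)) = σ ⟨k, by omega⟩ := Fin.ext hcase.1
          rw [e1, e2]
          exact ih (by omega)
        · refine (ih (by omega)).tail ?_
          simp only [hR]
          refine ⟨Nat.lt_succ_iff.mp (σ (⟨k+1, by omega⟩ : Fin (L+1))).isLt,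
            by rw [dist_comm]; exact hdist ⟨k, by omega⟩,
            by rw [dist_comm]; exact hdist ⟨k+1, by omega⟩, ?_⟩
          push_neg at hcase
          have hσc : (σ (⟨k+1, by omega⟩ : Fin (L+1)) : ℕ) = (σ ⟨k, by omega⟩ : ℕ) ∨
              (σ (⟨k+1, by omega⟩ : Fin (L+1)) : ℕ) = (σ ⟨k, by omega⟩ : ℕ) + 1 := by omega
          have hβc : (β (⟨k+1, by omega⟩ : Fin (L+1)) : ℕ) = (β ⟨k, by omega⟩ : ℕ) ∨
              (β (⟨k+1, by omega⟩ : Fin (L+1)) : ℕ) = (β ⟨k, by omega⟩ : ℕ) + 1 := by omega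
          rcases hβc with hβc | hβc
          · rcases hσc with hσc | hσc
            · exact ((hcase hσc) hβc).elim
            · exact Or.inl ⟨(congrArg Q (Fin.ext hβc)).symm, hσc⟩
          · have hadj' : G.Adj (Q (β ⟨k, by omega⟩)) (Q (β ⟨k+1, by omega⟩)) :=
              adj_step G Q hadj _ _ hβc
            rcases hσc with hσc | hσc
            · exact Or.inr (Or.inr ⟨hadj', hσc⟩)
            · exact Or.inr (Or.inl ⟨hadj', hσc⟩)
    have h0σ : σ 0 = 0 := finMS_zero σ hmσ hsσ
    have h0β : β 0 = 0 := finMS_zero β hmβ hsβ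
    have hLσ : σ (Fin.last L) = Fin.last n := finMS_last σ hmσ hsσ
    have hLβ : β (Fin.last L) = Fin.last m := finMS_last β hmβ hsβ
    have hchain := chain L le_rfl
    have e0 : (⟨0, by omega⟩ : Fin (L+1)) = 0 := Fin.ext (by simp)
    have eL : (⟨L, by omega⟩ : Fin (L+1)) = Fin.last L := rfl
    rw [e0, eL, h0σ, h0β, hLσ, hLβ] at hchain
    refine ⟨Q 0, Q (Fin.last m), ?_, ?_, ?_⟩
    · have := hdist 0
      rw [h0σ, h0β, dist_comm] at this
      simpa using this
    · have := hdist (Fin.last L)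
      rw [hLσ, hLβ, dist_comm] at this
      simpa using this
    · simpa using hchain
  · rintro ⟨v, w, hv, hw, hpath⟩
    have key : ∀ p : V × ℕ, Relation.ReflTransGen R (v, 0) p →
        ∃ (m : ℕ) (Q : ℕ → V) (L : ℕ) (σc βc : ℕ → ℕ),
          (∀ i < m, G.Adj (Q i) (Q (i+1))) ∧ Q m = p.1 ∧
          σc 0 = 0 ∧ βc 0 = 0 ∧ σc L = m ∧ βc L = p.2 ∧
          (∀ s < L, σc (s+1) = σc s ∨ σc (s+1) = σc s + 1) ∧
          (∀ s < L, βc (s+1) = βc s ∨ βc (s+1) = βc s + 1) ∧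
          (∀ s ≤ L, dist (pos (Q (σc s))) (P (βc s)) ≤ ε) := by
      intro p hp
      induction hp with
      | refl =>
        exact ⟨0, fun _ => v, 0, fun _ => 0, fun _ => 0, by omega, rfl, rfl, rfl, rfl, rfl,
          by omega, by omega, fun s _ => hv⟩
      | @tail b c hab hbc ih =>
        obtain ⟨m, Q, L, σc, βc, hQadj, hQm, hσ0, hβ0, hσL, hβL, hσstep, hβstep, hdist⟩ := ih
        have hσle : ∀ s ≤ L, σc s ≤ m := by
          intro s hs
          have := stepMonoLe σc L
            (fun t ht => by rcases hσstep t ht with h | h <;> omega) s L hs le_rfl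
          omega
        rw [hR] at hbc
        obtain ⟨hcn, hdb, hdc, hcase⟩ := hbc
        rcases hcase with ⟨hbc1, hj⟩ | ⟨hadjbc, hj⟩ | ⟨hadjbc, hj⟩
        · -- same vertex, advance curve index
          refine ⟨m, Q, L+1, (fun s => if s ≤ L then σc s else m),
            (fun s => if s ≤ L then βc s else b.2+1), hQadj, by rw [hQm]; exact hbc1, ?_, ?_,
            ?_, ?_, ?_, ?_, ?_⟩
          · show (if 0 ≤ L then σc 0 else m) = 0
            rw [if_pos (Nat.zero_le L)]; exact hσ0
          · show (if 0 ≤ L then βc 0 else b.2+1) = 0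
            rw [if_pos (Nat.zero_le L)]; exact hβ0
          · show (if L+1 ≤ L then σc (L+1) else m) = m
            rw [if_neg (by omega)]
          · show (if L+1 ≤ L then βc (L+1) else b.2+1) = c.2
            rw [if_neg (by omega)]; omega
          · intro s hs
            by_cases h : s < L
            · simp only [if_pos (by omega : s ≤ L), if_pos (by omega : s + 1 ≤ L)]
              exact hσstep s h
            · have es : s = L := by omega
              simp only [if_pos (by omega : s ≤ L), if_neg (by omega : ¬ (s + 1 ≤ L))]
              left; rw [es, hσL]
          · intro s hs
            by_cases h : s < L
            · simp only [if_pos (by omega : s ≤ L), if_pos (by omega : s + 1 ≤ L)]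
              exact hβstep s h
            · have es : s = L := by omega
              simp only [if_pos (by omega : s ≤ L), if_neg (by omega : ¬ (s + 1 ≤ L))]
              right; rw [es, hβL]
          · intro s hs
            by_cases h : s ≤ L
            · simp only [if_pos h]
              exact hdist s h
            · simp only [if_neg h]
              rw [hQm, hbc1, ← hj]
              exact hdc
        · -- adjacent vertex, advance curve index
          refine ⟨m+1, (fun i => if i ≤ m then Q i else c.1), L+1,
            (fun s => if s ≤ L then σc s else m+1),
            (fun s => if s ≤ L then βc s else b.2+1), ?_, ?_, ?_, ?_, ?_, ?_, ?_, ?_, ?_⟩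
          · intro i hi
            by_cases h : i < m
            · simp only [if_pos (by omega : i ≤ m), if_pos (by omega : i + 1 ≤ m)]
              exact hQadj i h
            · have ei : i = m := by omega
              simp only [if_pos (by omega : i ≤ m), if_neg (by omega : ¬ (i + 1 ≤ m))]
              rw [ei, hQm]; exact hadjbc
          · show (if m+1 ≤ m then Q (m+1) else c.1) = c.1
            rw [if_neg (by omega)]
          · show (if 0 ≤ L then σc 0 else m+1) = 0
            rw [if_pos (Nat.zero_le L)]; exact hσ0
          · show (if 0 ≤ L then βc 0 else b.2+1) = 0
            rw [if_pos (Nat.zero_le L)]; exact hβ0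
          · show (if L+1 ≤ L then σc (L+1) else m+1) = m+1
            rw [if_neg (by omega)]
          · show (if L+1 ≤ L then βc (L+1) else b.2+1) = c.2
            rw [if_neg (by omega)]; omega
          · intro s hs
            by_cases h : s < L
            · simp only [if_pos (by omega : s ≤ L), if_pos (by omega : s + 1 ≤ L)]
              exact hσstep s h
            · have es : s = L := by omega
              simp only [if_pos (by omega : s ≤ L), if_neg (by omega : ¬ (s + 1 ≤ L))]
              right; rw [es, hσL]
          · intro s hs
            by_cases h : s < L
            · simp only [if_pos (by omega : s ≤ L), if_pos (by omega : s + 1 ≤ L)]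
              exact hβstep s h
            · have es : s = L := by omega
              simp only [if_pos (by omega : s ≤ L), if_neg (by omega : ¬ (s + 1 ≤ L))]
              right; rw [es, hβL]
          · intro s hs
            by_cases h : s ≤ L
            · simp only [if_pos h, if_pos (hσle s h)]
              exact hdist s h
            · simp only [if_neg h, if_neg (by omega : ¬ (m+1 ≤ m))]
              rw [← hj]
              exact hdc
        · -- adjacent vertex, same curve index
          refine ⟨m+1, (fun i => if i ≤ m then Q i else c.1), L+1,
            (fun s => if s ≤ L then σc s else m+1),
            (fun s => if s ≤ L then βc s else b.2), ?_, ?_, ?_, ?_, ?_, ?_, ?_, ?_, ?_⟩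
          · intro i hi
            by_cases h : i < m
            · simp only [if_pos (by omega : i ≤ m), if_pos (by omega : i + 1 ≤ m)]
              exact hQadj i h
            · have ei : i = m := by omega
              simp only [if_pos (by omega : i ≤ m), if_neg (by omega : ¬ (i + 1 ≤ m))]
              rw [ei, hQm]; exact hadjbc
          · show (if m+1 ≤ m then Q (m+1) else c.1) = c.1
            rw [if_neg (by omega)]
          · show (if 0 ≤ L then σc 0 else m+1) = 0
            rw [if_pos (Nat.zero_le L)]; exact hσ0
          · show (if 0 ≤ L then βc 0 else b.2) = 0
            rw [if_pos (Nat.zero_le L)]; exact hβ0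
          · show (if L+1 ≤ L then σc (L+1) else m+1) = m+1
            rw [if_neg (by omega)]
          · show (if L+1 ≤ L then βc (L+1) else b.2) = c.2
            rw [if_neg (by omega)]; omega
          · intro s hs
            by_cases h : s < L
            · simp only [if_pos (by omega : s ≤ L), if_pos (by omega : s + 1 ≤ L)]
              exact hσstep s h
            · have es : s = L := by omega
              simp only [if_pos (by omega : s ≤ L), if_neg (by omega : ¬ (s + 1 ≤ L))]
              right; rw [es, hσL]
          · intro s hs
            by_cases h : s < L
            · simp only [if_pos (by omega : s ≤ L), if_pos (by omega : s + 1 ≤ L)]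
              exact hβstep s h
            · have es : s = L := by omega
              simp only [if_pos (by omega : s ≤ L), if_neg (by omega : ¬ (s + 1 ≤ L))]
              left; rw [es, hβL]
          · intro s hs
            by_cases h : s ≤ L
            · simp only [if_pos h, if_pos (hσle s h)]
              exact hdist s h
            · simp only [if_neg h, if_neg (by omega : ¬ (m+1 ≤ m))]
              rw [← hj]
              exact hdc
    obtain ⟨m, Q, L, σc, βc, hQadj, hQm0, hσ0, hβ0, hσL, hβL0, hσstep, hβstep, hdist⟩ :=
      key (w, n) hpath
    have hQm : Q m = w := hQm0
    have hβL : βc L = n := hβL0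
    have hσmono : ∀ s t, s ≤ t → t ≤ L → σc s ≤ σc t :=
      stepMonoLe σc L (fun t ht => by rcases hσstep t ht with h | h <;> omega)
    have hβmono : ∀ s t, s ≤ t → t ≤ L → βc s ≤ βc t :=
      stepMonoLe βc L (fun t ht => by rcases hβstep t ht with h | h <;> omega)
    have hσle : ∀ s ≤ L, σc s ≤ m := fun s hs => hσL ▸ hσmono s L hs le_rfl
    have hβle : ∀ s ≤ L, βc s ≤ n := fun s hs => hβL ▸ hβmono s L hs le_rfl
    refine ⟨m, fun i : Fin (m+1) => Q i, ?_, ?_⟩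
    · intro i
      exact hQadj i i.isLt
    · refine frechet_le_of_coupling (L := L) _ _
        (fun s => ⟨βc s, by have := hβle s (Nat.lt_succ_iff.mp s.isLt); omega⟩)
        (fun s => ⟨σc s, by have := hσle s (Nat.lt_succ_iff.mp s.isLt); omega⟩)
        ?_ ?_ ?_ ?_ ?_
      · intro a b hab
        exact Fin.mk_le_mk.mpr
          (hβmono a b (Fin.le_def.mp hab) (Nat.lt_succ_iff.mp b.isLt))
      · intro a b hab
        exact Fin.mk_le_mk.mpr
          (hσmono a b (Fin.le_def.mp hab) (Nat.lt_succ_iff.mp b.isLt))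
      · intro j
        obtain ⟨s, hs, hfs⟩ := natIVT βc L hβ0
          (fun t ht => by rcases hβstep t ht with h | h <;> omega) (j : ℕ)
          (by rw [hβL]; exact Nat.lt_succ_iff.mp j.isLt)
        exact ⟨⟨s, by omega⟩, Fin.ext hfs⟩
      · intro i
        obtain ⟨s, hs, hfs⟩ := natIVT σc L hσ0
          (fun t ht => by rcases hσstep t ht with h | h <;> omega) (i : ℕ)
          (by rw [hσL]; exact Nat.lt_succ_iff.mp i.isLt)
        exact ⟨⟨s, by omega⟩, Fin.ext hfs⟩
      · intro s
        rw [dist_comm]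
        exact hdist s (Nat.lt_succ_iff.mp s.isLt)
end
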